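/- arXiv:1402.1131 — 4 statements merged into one kernel-verified Lean document; each statement's English description precedes it below -/
import Mathlib

section
/- For every n ∈ {2, 3, 4} and every natural number r, we have 20 * n^r ≤ (5^r - 5) * (n^2 - n) + 20 * n. -/
lemma five_le_pow (m : ℕ) : (5:ℤ) ≤ 5 ^ (m + 1) := by
  calc (5:ℤ) = 5 ^ 1 := by norm_num
    _ ≤ 5 ^ (m + 1) := pow_le_pow_right₀ (by norm_num) (by omega)

theorem key_ineq (n : ℕ) (hn : n = 2 ∨ n = 3 ∨ n = 4) (r : ℕ) :
    (20 : ℤ) * n ^ r ≤ ((5 : ℤ) ^ r - 5) * ((n : ℤ) ^ 2 - n) + 20 * n := by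
  rcases hn with h | h | h <;> subst h <;>
  · induction r with
    | zero => norm_num
    | succ k ih =>
        rcases k with _ | m
        · norm_num
        · push_cast at ih ⊢
          rw [pow_succ _ (m + 1), pow_succ (5:ℤ) (m + 1)]
          have hb := five_le_pow m
          nlinarith [ih, hb]
end

section
/- Let N be a positive natural number and r : Fin N → ℕ a function with ∑_i 5^(r i) ≤ 6 * N. Then ∑_i (r i) * 20 ≤ 21 * N; in particular the average of r is at most 21/20. -/
lemma aux_rank : ∀ n : ℕ, n * 20 ≤ 5 ^ n + 15 := by
  intro n
  induction n with
  | zero => norm_num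
  | succ k ih =>
    rcases Nat.eq_zero_or_pos k with hk | hk
    · subst hk; norm_num
    · have h5 : 5 ≤ 5 ^ k := by
        calc 5 = 5 ^ 1 := by norm_num
        _ ≤ 5 ^ k := Nat.pow_le_pow_right (by norm_num) hk
      have : 5 ^ (k + 1) = 5 * 5 ^ k := by ring
      omega

theorem average_rank_le (N : ℕ) (hN : 0 < N) (r : Fin N → ℕ)
    (h : ∑ i, 5 ^ (r i) ≤ 6 * N) : ∑ i, (r i) * 20 ≤ 21 * N := by
  calc ∑ i, (r i) * 20 ≤ ∑ i, (5 ^ (r i) + 15) :=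
        Finset.sum_le_sum fun i _ => aux_rank (r i)
    _ = (∑ i, 5 ^ (r i)) + 15 * N := by
        rw [Finset.sum_add_distrib, Finset.sum_const, Finset.card_univ,
          Fintype.card_fin, smul_eq_mul, mul_comm]
    _ ≤ 6 * N + 15 * N := by omega
    _ = 21 * N := by ring
end

section
/- Let N be a positive natural number and r : Fin N → ℕ with ∑_i 5^(r i) ≤ 6 * N. Then for n ∈ {2,3,4}, ∑_i 20 * n^(r i) ≤ (n^2 - n + 20 * n) * N + (n^2 - n) * ∑_i 5^(r i) - 5 * (n^2 - n) * N; in particular ∑_i n^(r i) ≤ ((n^2 - n)/20 + n) * N, i.e., the average of n^(r i) over the family is at most (n² − n)/20 + n. -/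
lemma key_pointwise (n : ℤ) (h1 : 1 ≤ n) (h5 : n ≤ 5) :
    ∀ k : ℕ, 20 * n ^ k ≤ 20 * n + (n ^ 2 - n) * (5 ^ k - 5) := by
  have succ : ∀ k : ℕ, 20 * n ^ (k + 1) ≤ 20 * n + (n ^ 2 - n) * (5 ^ (k + 1) - 5) := by
    intro k
    induction k with
    | zero => norm_num
    | succ m ih =>
      have h5m : (5 : ℤ) ^ (m + 1) ≥ 5 := by
        calc (5:ℤ)^(m+1) ≥ 5^1 := by
              apply pow_le_pow_right₀ (by norm_num) (by omega)
          _ = 5 := by norm_num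
      have e1 : n ^ (m + 2) = n * n ^ (m + 1) := by ring
      have e2 : (5:ℤ) ^ (m + 2) = 5 * 5 ^ (m + 1) := by ring
      nlinarith [mul_nonneg (mul_nonneg (by nlinarith : (0:ℤ) ≤ n * (n - 1)) (by linarith : (0:ℤ) ≤ 5 - n)) (by linarith : (0:ℤ) ≤ (5:ℤ)^(m+1) - 5)]
  intro k
  cases k with
  | zero => simp; nlinarith
  | succ m => exact succ m

theorem average_n_pow_rank_le (N : ℕ) (hN : 0 < N) (r : Fin N → ℕ)
    (h : ∑ i, (5 : ℤ) ^ (r i) ≤ 6 * N) (n : ℕ) (hn : n = 2 ∨ n = 3 ∨ n = 4) :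
    (∑ i, (20 : ℤ) * (n : ℤ) ^ (r i) ≤
        ((n : ℤ) ^ 2 - n + 20 * n) * N + ((n : ℤ) ^ 2 - n) * ∑ i, (5 : ℤ) ^ (r i)
          - 5 * ((n : ℤ) ^ 2 - n) * N) ∧
    20 * ∑ i, (n : ℤ) ^ (r i) ≤ ((n : ℤ) ^ 2 - n + 20 * n) * N := by
  have h1 : (1 : ℤ) ≤ n := by rcases hn with rfl | rfl | rfl <;> norm_num
  have h5 : (n : ℤ) ≤ 5 := by rcases hn with rfl | rfl | rfl <;> norm_num
  have key : ∀ i : Fin N, 20 * (n:ℤ) ^ (r i) ≤ 20 * n + ((n:ℤ) ^ 2 - n) * (5 ^ (r i) - 5) :=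
    fun i => key_pointwise (n:ℤ) h1 h5 (r i)
  have hsum : 20 * ∑ i, (n : ℤ) ^ (r i) ≤
      20 * n * N + ((n:ℤ) ^ 2 - n) * ∑ i, (5:ℤ) ^ (r i) - 5 * ((n:ℤ)^2 - n) * N := by
    have e2 := Finset.sum_le_sum (s := (Finset.univ : Finset (Fin N))) (fun i _ => key i)
    simp only [Finset.sum_add_distrib, Finset.sum_const, Finset.card_univ, Fintype.card_fin,
      nsmul_eq_mul, mul_sub, Finset.sum_sub_distrib, ← Finset.mul_sum] at e2
    rw [Finset.mul_sum] at e2 ⊢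
    rw [← Finset.mul_sum] at e2 ⊢
    linarith
  have hnn : (0:ℤ) ≤ (n:ℤ)^2 - n := by nlinarith
  constructor
  · have : ∑ i, (20 : ℤ) * (n : ℤ) ^ (r i) = 20 * ∑ i, (n : ℤ) ^ (r i) := by
      rw [Finset.mul_sum]
    rw [this]
    nlinarith [hsum, mul_nonneg hnn (Int.ofNat_nonneg N)]
  · nlinarith [hsum, mul_nonneg hnn (by linarith : (0:ℤ) ≤ 6 * N - ∑ i, (5:ℤ) ^ (r i))]
end

section
/- The equation z² = 2x⁴ - 34y⁴ has no solution in rational numbers (x, y, z) with (x, y) ≠ (0, 0). -/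
private lemma LR_zero : (17 : ZMod 17) = 0 := by decide

private lemma LR_two : IsSquare (2 : ZMod 17) := ⟨6, by decide⟩

private lemma LR_negone : IsSquare (-1 : ZMod 17) := ⟨4, by decide⟩

private lemma LR_nosol : ∀ a s : ZMod 17, a ^ 4 = 2 * (s * s) ^ 2 → a = 0 := by decide

private lemma LR_sq_of_forall_prime (n : ℕ)
    (h : ∀ p : ℕ, p.Prime → p ∣ n → IsSquare ((p : ZMod 17))) :
    IsSquare ((n : ZMod 17)) := by
  induction n using induction_on_primes with
  | zero => exact ⟨0, by simp⟩
  | one => exact ⟨1, by simp⟩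
  | prime_mul p a hp ih =>
    push_cast
    exact (h p hp ⟨a, rfl⟩).mul (ih fun q hq hqa => h q hq (hqa.mul_left p))

private lemma LR_descent (a b w : ℤ) (hab : IsCoprime a b)
    (h : a ^ 4 - 17 * b ^ 4 = 2 * w ^ 2) : False := by
  haveI : Fact (Nat.Prime 17) := ⟨by norm_num⟩
  have p17 : Prime (17 : ℤ) := by norm_num
  -- 17 does not divide a
  have h17a : ¬ (17 : ℤ) ∣ a := by
    intro hda
    have hdw : (17 : ℤ) ∣ w := by
      have hd : (17 : ℤ) ∣ 2 * w ^ 2 := by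
        rw [← h]
        exact dvd_sub (dvd_pow hda (by norm_num)) ⟨b ^ 4, by ring⟩
      rcases p17.dvd_mul.mp hd with h2 | hw2
      · norm_num at h2
      · exact p17.dvd_of_dvd_pow hw2
    have hdb : (17 : ℤ) ∣ b := by
      have h2 : (17 : ℤ) * 17 ∣ 17 * b ^ 4 := by
        have e : 17 * b ^ 4 = a ^ 4 - 2 * w ^ 2 := by linarith
        rw [e, show (17:ℤ)*17 = 17^2 by norm_num]
        exact dvd_sub (dvd_trans (by norm_num) (pow_dvd_pow_of_dvd hda 4))
          (Dvd.dvd.mul_left (pow_dvd_pow_of_dvd hdw 2) 2)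
      have hb4 : (17 : ℤ) ∣ b ^ 4 :=
        (mul_dvd_mul_iff_left (by norm_num : (17:ℤ) ≠ 0)).mp h2
      exact p17.dvd_of_dvd_pow hb4
    exact p17.not_unit (hab.isUnit_of_dvd' hda hdb)
  -- 17 does not divide w
  have h17w : ¬ (17 : ℤ) ∣ w := by
    intro hdw
    apply h17a
    have hz : ((a : ZMod 17)) ^ 4 = 0 := by
      have hc := congrArg (fun t : ℤ => (t : ZMod 17)) h
      push_cast at hc
      have hw0 : ((w : ℤ) : ZMod 17) = 0 :=
        (ZMod.intCast_zmod_eq_zero_iff_dvd w 17).mpr hdw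
      rw [hw0] at hc
      linear_combination hc + (b:ZMod 17)^4 * LR_zero
    have ha0 := pow_eq_zero_iff (n := 4) (by norm_num) |>.mp hz
    exact (ZMod.intCast_zmod_eq_zero_iff_dvd a 17).mp ha0
  -- every prime factor of w.natAbs is a square mod 17
  have key : IsSquare ((w.natAbs : ZMod 17)) := by
    apply LR_sq_of_forall_prime
    intro p hp hpw
    have hpZ : (p : ℤ) ∣ w :=
      dvd_trans (Int.natCast_dvd_natCast.mpr hpw) (Int.natAbs_dvd.mpr dvd_rfl)
    rcases eq_or_ne p 2 with rfl | hp2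
    · exact_mod_cast LR_two
    -- p is an odd prime, p ≠ 17
    have hp17 : p ≠ 17 := by
      rintro rfl
      exact h17w hpZ
    haveI : Fact p.Prime := ⟨hp⟩
    have hpZprime : Prime (p : ℤ) := Nat.prime_iff_prime_int.mp hp
    -- mod p : a^4 = 17 b^4
    have hc := congrArg (fun t : ℤ => (t : ZMod p)) h
    push_cast at hc
    have hw0 : ((w : ℤ) : ZMod p) = 0 :=
      (ZMod.intCast_zmod_eq_zero_iff_dvd w p).mpr hpZ
    rw [hw0] at hc
    have heq : ((a : ZMod p)) ^ 4 = 17 * ((b : ZMod p)) ^ 4 := by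
      linear_combination hc
    have hb0 : ((b : ℤ) : ZMod p) ≠ 0 := by
      intro hb
      have ha4 : ((a : ZMod p)) ^ 4 = 0 := by rw [heq, hb]; ring
      have ha0 := pow_eq_zero_iff (n := 4) (by norm_num) |>.mp ha4
      have hda : (p : ℤ) ∣ a := (ZMod.intCast_zmod_eq_zero_iff_dvd a p).mp ha0
      have hdb : (p : ℤ) ∣ b := (ZMod.intCast_zmod_eq_zero_iff_dvd b p).mp hb
      exact hpZprime.not_unit (hab.isUnit_of_dvd' hda hdb)
    have hsq17 : IsSquare ((17 : ℕ) : ZMod p) := by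
      refine ⟨((a : ZMod p) * (b : ZMod p)⁻¹) ^ 2, ?_⟩
      have e2 : ((a : ZMod p) * (b : ZMod p)⁻¹) ^ 2 * ((a : ZMod p) * (b : ZMod p)⁻¹) ^ 2
          = (a : ZMod p) ^ 4 * ((b : ZMod p) ^ 4)⁻¹ := by
        field_simp
      rw [e2, heq]
      push_cast
      field_simp
    exact (ZMod.exists_sq_eq_prime_iff_of_mod_four_eq_one (p := 17) (q := p)
      (by norm_num) hp2).mpr hsq17
  -- hence w is a square mod 17
  have keyw : IsSquare ((w : ZMod 17)) := by
    rcases Int.natAbs_eq w with he | he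
    · rw [he, Int.cast_natCast]
      exact key
    · rw [he, Int.cast_neg, Int.cast_natCast, neg_eq_neg_one_mul]
      exact IsSquare.mul LR_negone key
  -- final contradiction
  obtain ⟨s, hs⟩ := keyw
  apply h17a
  have hc := congrArg (fun t : ℤ => (t : ZMod 17)) h
  push_cast at hc
  rw [hs] at hc
  have heq : ((a : ZMod 17)) ^ 4 = 2 * (s * s) ^ 2 := by
    linear_combination hc + (b : ZMod 17) ^ 4 * LR_zero
  exact (ZMod.intCast_zmod_eq_zero_iff_dvd a 17).mp (LR_nosol _ _ heq)

private lemma LR_int (a b c : ℤ) (hab : a ≠ 0 ∨ b ≠ 0)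
    (h : c ^ 2 = 2 * a ^ 4 - 34 * b ^ 4) : False := by
  have hgpos : 0 < Int.gcd a b := by
    rcases hab with h' | h'
    · exact Int.gcd_pos_of_ne_zero_left b h'
    · exact Int.gcd_pos_of_ne_zero_right a h'
  set g : ℤ := (Int.gcd a b : ℤ) with hg
  have hg0 : g ≠ 0 := by positivity
  have hcop : IsCoprime (a / g) (b / g) :=
    Int.isCoprime_iff_gcd_eq_one.mpr (Int.gcd_div_gcd_div_gcd hgpos)
  have ha : a = g * (a / g) := (Int.mul_ediv_cancel' (Int.gcd_dvd_left a b)).symm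
  have hb : b = g * (b / g) := (Int.mul_ediv_cancel' (Int.gcd_dvd_right a b)).symm
  set a1 := a / g
  set b1 := b / g
  have hc2 : c ^ 2 = (g ^ 2) ^ 2 * (2 * a1 ^ 4 - 34 * b1 ^ 4) := by
    rw [h, ha, hb]; ring
  have hdvd : g ^ 2 ∣ c := by
    rw [← Int.pow_dvd_pow_iff (two_ne_zero), hc2]
    exact Dvd.intro _ rfl
  obtain ⟨c1, hc1⟩ := hdvd
  have hc1sq : c1 ^ 2 = 2 * a1 ^ 4 - 34 * b1 ^ 4 := by
    have : (g ^ 2) ^ 2 * c1 ^ 2 = (g ^ 2) ^ 2 * (2 * a1 ^ 4 - 34 * b1 ^ 4) := by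
      rw [← hc2, hc1]; ring
    exact mul_left_cancel₀ (pow_ne_zero 2 (pow_ne_zero 2 hg0)) this
  have h2c1 : (2 : ℤ) ∣ c1 := by
    have : (2 : ℤ) ∣ c1 ^ 2 := ⟨a1 ^ 4 - 17 * b1 ^ 4, by linarith⟩
    exact Int.Prime.dvd_pow' (by norm_num) this
  obtain ⟨w, hw⟩ := h2c1
  rw [hw] at hc1sq
  have h4 : 4 * w ^ 2 = 2 * a1 ^ 4 - 34 * b1 ^ 4 := by linear_combination hc1sq
  exact LR_descent a1 b1 w hcop (by linarith [h4])

theorem lind_reichardt (x y z : ℚ) (h : z ^ 2 = 2 * x ^ 4 - 34 * y ^ 4) :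
    x = 0 ∧ y = 0 := by
  by_contra hxy
  rw [not_and_or] at hxy
  set a : ℤ := x.num * (y.den * z.den) with ha
  set b : ℤ := y.num * (x.den * z.den) with hb
  set c : ℤ := z.num * z.den * (x.den * y.den) ^ 2 with hc
  set dq : ℚ := (x.den : ℚ) * (y.den : ℚ) * (z.den : ℚ) with hdq
  have hxnum : (x.num : ℚ) = x * (x.den : ℚ) :=
    ((eq_div_iff (Nat.cast_ne_zero.mpr x.den_nz)).mp (Rat.num_div_den x).symm).symm
  have hynum : (y.num : ℚ) = y * (y.den : ℚ) :=
    ((eq_div_iff (Nat.cast_ne_zero.mpr y.den_nz)).mp (Rat.num_div_den y).symm).symm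
  have hznum : (z.num : ℚ) = z * (z.den : ℚ) :=
    ((eq_div_iff (Nat.cast_ne_zero.mpr z.den_nz)).mp (Rat.num_div_den z).symm).symm
  have e1 : (a : ℚ) = x * dq := by
    rw [ha, hdq]; push_cast
    rw [hxnum]; ring
  have e2 : (b : ℚ) = y * dq := by
    rw [hb, hdq]; push_cast
    rw [hynum]; ring
  have e3 : (c : ℚ) = z * dq ^ 2 := by
    rw [hc, hdq]; push_cast
    rw [hznum]; ring
  have hQ : (c : ℚ) ^ 2 = 2 * (a : ℚ) ^ 4 - 34 * (b : ℚ) ^ 4 := by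
    rw [e1, e2, e3]
    linear_combination dq ^ 4 * h
  have hZ : c ^ 2 = 2 * a ^ 4 - 34 * b ^ 4 := by exact_mod_cast hQ
  have hab : a ≠ 0 ∨ b ≠ 0 := by
    rcases hxy with hx | hy
    · left
      simp only [ha, mul_ne_zero_iff]
      exact ⟨Rat.num_ne_zero.mpr hx, ⟨Int.natCast_ne_zero.mpr y.den_nz, Int.natCast_ne_zero.mpr z.den_nz⟩⟩
    · right
      simp only [hb, mul_ne_zero_iff]
      exact ⟨Rat.num_ne_zero.mpr hy, ⟨Int.natCast_ne_zero.mpr x.den_nz, Int.natCast_ne_zero.mpr z.den_nz⟩⟩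
  exact LR_int a b c hab hZ
end
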